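/- Alignment in polar convolution: let A₁, A₂ ⊆ ℝⁿ be closed convex sets containing the origin. Suppose x = x₁ + x₂ with γ_{A₁+A₂}(x) = γ_{A₁}(x₁) = γ_{A₂}(x₂), all finite, and ⟨x, z⟩ = γ_{A₁+A₂}(x)·σ_{A₁+A₂}(z) with σ_{A₁+A₂}(z) finite. Then ⟨x₁, z⟩ = γ_{A₁}(x₁)·σ_{A₁}(z) and ⟨x₂, z⟩ = γ_{A₂}(x₂)·σ_{A₂}(z). -/

import Mathlib

open scoped RealInnerProductSpace Pointwise

noncomputable def supportFn {n : ℕ} (C : Set (EuclideanSpace ℝ (Fin n)))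
    (z : EuclideanSpace ℝ (Fin n)) : EReal :=
  sSup ((fun x => ((⟪x, z⟫ : ℝ) : EReal)) '' C)

noncomputable def gaugeE {n : ℕ} (C : Set (EuclideanSpace ℝ (Fin n)))
    (x : EuclideanSpace ℝ (Fin n)) : EReal :=
  sInf ((fun r : ℝ => (r : EReal)) '' {r : ℝ | 0 ≤ r ∧ x ∈ r • C})

/-! Summing the inequalities `⟪xᵢ, z⟫ ≤ γ_{Aᵢ}(xᵢ) σ_{Aᵢ}(z)` gives
`⟪x, z⟫ ≤ γ (σ_{A₁}(z) + σ_{A₂}(z)) = γ σ_{A₁+A₂}(z)`, where `γ` is the common value of the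
gauges. Alignment says this inequality is an equality, so neither summand can be strict. -/

section

variable {n : ℕ} {C A₁ A₂ : Set (EuclideanSpace ℝ (Fin n))} {a x z : EuclideanSpace ℝ (Fin n)}

lemma le_supportFn (ha : a ∈ C) : ((⟪a, z⟫ : ℝ) : EReal) ≤ supportFn C z :=
  le_sSup (Set.mem_image_of_mem _ ha)

lemma supportFn_ne_bot (hC : C.Nonempty) : supportFn C z ≠ ⊥ :=
  ne_bot_of_le_ne_bot (EReal.coe_ne_bot _) (le_supportFn hC.some_mem)

lemma supportFn_add : supportFn (A₁ + A₂) z = supportFn A₁ z + supportFn A₂ z := by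
  apply le_antisymm
  · refine sSup_le ?_
    rintro _ ⟨_, ⟨a₁, ha₁, a₂, ha₂, rfl⟩, rfl⟩
    simp only [inner_add_left, EReal.coe_add]
    exact add_le_add (le_supportFn ha₁) (le_supportFn ha₂)
  · refine EReal.add_le_of_forall_lt fun c₁ hc₁ c₂ hc₂ => ?_
    obtain ⟨_, ⟨a₁, ha₁, rfl⟩, hlt₁⟩ := lt_sSup_iff.1 hc₁
    obtain ⟨_, ⟨a₂, ha₂, rfl⟩, hlt₂⟩ := lt_sSup_iff.1 hc₂
    calc c₁ + c₂ ≤ ((⟪a₁, z⟫ : ℝ) : EReal) + ((⟪a₂, z⟫ : ℝ) : EReal) :=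
          add_le_add hlt₁.le hlt₂.le
      _ = ((⟪a₁ + a₂, z⟫ : ℝ) : EReal) := by rw [inner_add_left, EReal.coe_add]
      _ ≤ supportFn (A₁ + A₂) z := le_supportFn (Set.add_mem_add ha₁ ha₂)

lemma gaugeE_nonneg : 0 ≤ gaugeE C x :=
  le_sInf <| by
    rintro _ ⟨r, ⟨hr, -⟩, rfl⟩
    exact EReal.coe_nonneg.2 hr

lemma nonempty_radii_of_gaugeE_ne_top (h : gaugeE C x ≠ ⊤) :
    {r : ℝ | 0 ≤ r ∧ x ∈ r • C}.Nonempty := by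
  by_contra hR
  rw [Set.not_nonempty_iff_eq_empty] at hR
  simp [gaugeE, hR] at h

lemma nonempty_of_gaugeE_ne_top (h : gaugeE C x ≠ ⊤) : C.Nonempty :=
  have ⟨_, _, hx⟩ := nonempty_radii_of_gaugeE_ne_top h
  Set.smul_set_nonempty.1 ⟨x, hx⟩

/-- `γ_C(x)` is the infimum of the radii `r` with `x ∈ r • C`, each of which satisfies
`⟪x, z⟫ ≤ r σ_C(z)`; that inequality defines a closed set of radii. -/
lemma inner_le_of_gaugeE_eq_of_supportFn_eq {g s : ℝ} (hg : gaugeE C x = g)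
    (hs : supportFn C z = s) : ⟪x, z⟫ ≤ g * s := by
  have hglb : IsGLB {r : ℝ | 0 ≤ r ∧ x ∈ r • C} g :=
    IsGLB.of_image EReal.coe_le_coe_iff (hg ▸ isGLB_sInf _)
  have hradii : {r : ℝ | 0 ≤ r ∧ x ∈ r • C} ⊆ {r | ⟪x, z⟫ ≤ r * s} := by
    rintro r ⟨hr, a, ha, rfl⟩
    rw [Set.mem_ofPred_eq, real_inner_smul_left]
    exact mul_le_mul_of_nonneg_left (EReal.coe_le_coe_iff.1 (hs ▸ le_supportFn ha)) hr
  exact closure_minimal hradii (isClosed_le continuous_const (continuous_mul_const s))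
    (hglb.mem_closure (nonempty_radii_of_gaugeE_ne_top (hg ▸ EReal.coe_ne_top g)))

end

theorem alignment_polar_convolution_general {n : ℕ} (A₁ A₂ : Set (EuclideanSpace ℝ (Fin n)))
    (x x₁ x₂ z : EuclideanSpace ℝ (Fin n))
    (hx : x = x₁ + x₂)
    (hg1 : gaugeE (A₁ + A₂) x = gaugeE A₁ x₁)
    (hg2 : gaugeE (A₁ + A₂) x = gaugeE A₂ x₂)
    (hgfin : gaugeE (A₁ + A₂) x ≠ ⊤)
    (hσfin : supportFn (A₁ + A₂) z ≠ ⊤)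
    (halign : ((⟪x, z⟫ : ℝ) : EReal) = gaugeE (A₁ + A₂) x * supportFn (A₁ + A₂) z) :
    ((⟪x₁, z⟫ : ℝ) : EReal) = gaugeE A₁ x₁ * supportFn A₁ z ∧
      ((⟪x₂, z⟫ : ℝ) : EReal) = gaugeE A₂ x₂ * supportFn A₂ z := by
  obtain ⟨g, hg⟩ : ∃ g : ℝ, gaugeE (A₁ + A₂) x = g :=
    ⟨_, (EReal.coe_toReal hgfin (ne_bot_of_le_ne_bot EReal.zero_ne_bot gaugeE_nonneg)).symm⟩
  have hσ₁ := supportFn_ne_bot (z := z) (nonempty_of_gaugeE_ne_top (hg1 ▸ hgfin))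
  have hσ₂ := supportFn_ne_bot (z := z) (nonempty_of_gaugeE_ne_top (hg2 ▸ hgfin))
  rw [supportFn_add] at hσfin halign
  obtain ⟨hσ₁fin, hσ₂fin⟩ := (EReal.add_ne_top_iff_ne_top₂ hσ₁ hσ₂).1 hσfin
  obtain ⟨s₁, hs₁⟩ : ∃ s₁ : ℝ, supportFn A₁ z = s₁ := ⟨_, (EReal.coe_toReal hσ₁fin hσ₁).symm⟩
  obtain ⟨s₂, hs₂⟩ : ∃ s₂ : ℝ, supportFn A₂ z = s₂ := ⟨_, (EReal.coe_toReal hσ₂fin hσ₂).symm⟩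
  have h₁ := inner_le_of_gaugeE_eq_of_supportFn_eq (hg1 ▸ hg) hs₁
  have h₂ := inner_le_of_gaugeE_eq_of_supportFn_eq (hg2 ▸ hg) hs₂
  rw [hg, hs₁, hs₂] at halign
  have hsum : ⟪x₁, z⟫ + ⟪x₂, z⟫ = g * (s₁ + s₂) := by
    rw [← inner_add_left, ← hx]
    exact_mod_cast halign
  rw [← hg1, ← hg2, hg, hs₁, hs₂]
  constructor <;> norm_cast <;> linarith

/-- Alignment in polar convolution: if `x = x₁ + x₂` balances the gauges
`γ_{A₁+A₂}(x) = γ_{A₁}(x₁) = γ_{A₂}(x₂)` (all finite) and `(x, z)` is `(A₁+A₂)`-aligned with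
`σ_{A₁+A₂}(z)` finite, then each `(xᵢ, z)` is `Aᵢ`-aligned. -/
theorem alignment_polar_convolution {n : ℕ} (A₁ A₂ : Set (EuclideanSpace ℝ (Fin n)))
    (h₁ : IsClosed A₁) (h₁conv : Convex ℝ A₁) (h₁0 : (0 : EuclideanSpace ℝ (Fin n)) ∈ A₁)
    (h₂ : IsClosed A₂) (h₂conv : Convex ℝ A₂) (h₂0 : (0 : EuclideanSpace ℝ (Fin n)) ∈ A₂)
    (x x₁ x₂ z : EuclideanSpace ℝ (Fin n))
    (hx : x = x₁ + x₂)
    (hg1 : gaugeE (A₁ + A₂) x = gaugeE A₁ x₁)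
    (hg2 : gaugeE (A₁ + A₂) x = gaugeE A₂ x₂)
    (hgfin : gaugeE (A₁ + A₂) x ≠ ⊤)
    (hσfin : supportFn (A₁ + A₂) z ≠ ⊤)
    (halign : ((⟪x, z⟫ : ℝ) : EReal) = gaugeE (A₁ + A₂) x * supportFn (A₁ + A₂) z) :
    ((⟪x₁, z⟫ : ℝ) : EReal) = gaugeE A₁ x₁ * supportFn A₁ z ∧
      ((⟪x₂, z⟫ : ℝ) : EReal) = gaugeE A₂ x₂ * supportFn A₂ z :=
  alignment_polar_convolution_general A₁ A₂ x x₁ x₂ z hx hg1 hg2 hgfin hσfin halign
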